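/- Let (T_p)_{p∈ℤ} ⊆ ℝ[Z,W] be defined by T₀ = 3, T₁ = 3Z, T₂ = 9Z² − 6W and T_{p+3} = 3Z·T_{p+2} − 3W·T_{p+1} + T_p for all p ∈ ℤ. Then for all natural numbers p, q ≥ 0, Γ(T_p, T_q) = (pq/2)(T_p T_q − 3 T_{p+q}). -/

import Mathlib

/-!
The `T_p` are the power sums `z₁ᵖ + z₂ᵖ + z₃ᵖ` of the roots of `t³ - 3Z t² + 3W t - 1`.
`Γ` is a symmetric biderivation, so applied to the recurrence it produces the same three-term
recurrence plus terms involving only `Γ(Z, ·)` and `Γ(W, ·)`. Hence everything follows by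
induction along the recurrence from the values of `Γ` on `Z, W`, the formulas
`2Γ(Z, T_q) = q (Z T_q - T_{q+1})` and `2Γ(W, T_q) = q (2W T_q - 3Z T_{q+1} + T_{q+2})`,
and one quadratic relation among the `T_p`.
-/

noncomputable section

open MvPolynomial

/-- The carré du champ `Γ` of the deltoid model on `ℝ[Z,W]`, with `Z = X 0`, `W = X 1`. -/
def Gam (f g : MvPolynomial (Fin 2) ℝ) : MvPolynomial (Fin 2) ℝ :=
  (X 1 - (X 0) ^ 2) * pderiv 0 f * pderiv 0 g
    + C ((1 : ℝ) / 2) * (1 - X 0 * X 1) *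
        (pderiv 0 f * pderiv 1 g + pderiv 1 f * pderiv 0 g)
    + (X 0 - (X 1) ^ 2) * pderiv 1 f * pderiv 1 g

local notation "ℝ[Z,W]" => MvPolynomial (Fin 2) ℝ

section Gam

variable (f g h : ℝ[Z,W])

theorem Gam_comm : Gam f g = Gam g f := by
  unfold Gam; ring

theorem Gam_add_right : Gam f (g + h) = Gam f g + Gam f h := by
  simp only [Gam, map_add]; ring

theorem Gam_sub_right : Gam f (g - h) = Gam f g - Gam f h := by
  simp only [Gam, map_sub]; ring

theorem Gam_mul_right : Gam f (g * h) = g * Gam f h + h * Gam f g := by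
  simp only [Gam, pderiv_mul]; ring

theorem Gam_ofNat_right (n : ℕ) [n.AtLeastTwo] : Gam f (no_index (OfNat.ofNat n)) = 0 := by
  simp [Gam, ← map_ofNat C n]

theorem Gam_pow_two_right : Gam f (g ^ 2) = 2 * g * Gam f g := by
  rw [pow_two, Gam_mul_right]; ring

theorem Gam_X_zero_X_zero : Gam (X 0) (X 0) = X 1 - X 0 ^ 2 := by
  simp [Gam, pderiv_X]

theorem two_mul_Gam_X_zero_X_one : 2 * Gam (X 0) (X 1) = 1 - X 0 * X 1 := by
  simp [Gam, pderiv_X, ← map_ofNat C 2, ← mul_assoc, ← map_mul]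

theorem Gam_X_one_X_one : Gam (X 1) (X 1) = X 0 - X 1 ^ 2 := by
  simp [Gam, pderiv_X]

end Gam

def deltoidT : ℕ → ℝ[Z,W]
  | 0 => 3
  | 1 => 3 * X 0
  | 2 => 9 * X 0 ^ 2 - 6 * X 1
  | n + 3 => 3 * X 0 * deltoidT (n + 2) - 3 * X 1 * deltoidT (n + 1) + deltoidT n

theorem two_mul_Gam_X_zero_deltoidT (q : ℕ) :
    2 * Gam (X 0) (deltoidT q) = (q : ℝ[Z,W]) * (X 0 * deltoidT q - deltoidT (q + 1)) := by
  have hZW := two_mul_Gam_X_zero_X_one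
  induction q using deltoidT.induct with
  | case1 => simp [deltoidT, Gam_ofNat_right]
  | case2 =>
    simp only [deltoidT, Gam_mul_right, Gam_ofNat_right, Gam_X_zero_X_zero]
    push_cast; ring
  | case3 =>
    simp only [deltoidT, Gam_sub_right, Gam_mul_right, Gam_pow_two_right, Gam_ofNat_right,
      Gam_X_zero_X_zero]
    push_cast
    linear_combination (-6 : ℝ[Z,W]) * hZW
  | case4 q ih2 ih1 ih0 =>
    simp only [Nat.succ_eq_add_one]
    push_cast at ih2 ih1 ⊢
    simp only [deltoidT, Gam_add_right, Gam_sub_right, Gam_mul_right,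
      Gam_ofNat_right, Gam_X_zero_X_zero] at ih2 ⊢
    linear_combination 3 * X 0 * ih2 - 3 * X 1 * ih1 + ih0 - 3 * deltoidT (q + 1) * hZW

theorem two_mul_Gam_X_one_deltoidT (q : ℕ) :
    2 * Gam (X 1) (deltoidT q)
      = (q : ℝ[Z,W]) * (2 * X 1 * deltoidT q - 3 * X 0 * deltoidT (q + 1) + deltoidT (q + 2)) := by
  have hWZ : 2 * Gam (X 1) (X 0) = 1 - X 0 * X 1 := by
    rw [Gam_comm, two_mul_Gam_X_zero_X_one]
  induction q using deltoidT.induct with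
  | case1 => simp [deltoidT, Gam_ofNat_right]
  | case2 =>
    simp only [deltoidT, Gam_mul_right, Gam_ofNat_right]
    push_cast
    linear_combination (3 : ℝ[Z,W]) * hWZ
  | case3 =>
    simp only [deltoidT, Gam_sub_right, Gam_mul_right, Gam_pow_two_right,
      Gam_ofNat_right, Gam_X_one_X_one]
    push_cast
    linear_combination (18 * X 0 : ℝ[Z,W]) * hWZ
  | case4 q ih2 ih1 ih0 =>
    simp only [Nat.succ_eq_add_one]
    push_cast at ih2 ih1 ⊢
    simp only [deltoidT, Gam_add_right, Gam_sub_right, Gam_mul_right,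
      Gam_ofNat_right, Gam_X_one_X_one] at ih2 ih1 ⊢
    linear_combination 3 * X 0 * ih2 - 3 * X 1 * ih1 + ih0 + 3 * deltoidT (q + 2) * hWZ

/- For roots `zᵢ, zⱼ, zₖ` with `i ≠ j`, `zᵢzⱼ(zᵢ + zⱼ - 3Z) = -zᵢzⱼzₖ = -1`, so in the double sum
over roots of the left-hand side only the diagonal terms survive. -/
theorem deltoidT_mul_relation (p q : ℕ) :
    deltoidT p * deltoidT q + deltoidT (p + 2) * deltoidT (q + 1)
        - 3 * X 0 * deltoidT (p + 1) * deltoidT (q + 1) + deltoidT (p + 1) * deltoidT (q + 2)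
      = 3 * X 0 * deltoidT (p + q + 2) - 6 * X 1 * deltoidT (p + q + 1)
          + 3 * deltoidT (p + q) := by
  induction q using deltoidT.induct with
  | case1 => simp only [deltoidT, add_zero]; ring
  | case2 | case3 => simp only [deltoidT]; ring
  | case4 q ih2 ih1 ih0 =>
    simp only [Nat.succ_eq_add_one, ← add_assoc] at ih2 ih1 ih0 ⊢
    simp only [deltoidT] at ih2 ih1 ih0 ⊢
    linear_combination 3 * X 0 * ih2 - 3 * X 1 * ih1 + ih0

theorem two_mul_Gam_deltoidT (p q : ℕ) :
    2 * Gam (deltoidT p) (deltoidT q)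
      = (p : ℝ[Z,W]) * q * (deltoidT p * deltoidT q - 3 * deltoidT (p + q)) := by
  have hZ := two_mul_Gam_X_zero_deltoidT p
  have hW := two_mul_Gam_X_one_deltoidT p
  rw [Gam_comm] at hZ hW
  induction q using deltoidT.induct with
  | case1 => simp [deltoidT, Gam_ofNat_right]
  | case2 =>
    simp only [deltoidT, Gam_mul_right, Gam_ofNat_right]
    push_cast
    linear_combination (3 : ℝ[Z,W]) * hZ
  | case3 =>
    simp only [deltoidT, Gam_sub_right, Gam_mul_right, Gam_pow_two_right, Gam_ofNat_right]
    push_cast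
    linear_combination (18 * X 0 : ℝ[Z,W]) * hZ - 6 * hW
  | case4 q ih2 ih1 ih0 =>
    have hrel := deltoidT_mul_relation p q
    simp only [Nat.succ_eq_add_one, ← add_assoc] at ih2 ih1 ⊢
    push_cast at ih2 ih1 ⊢
    simp only [deltoidT, Gam_add_right, Gam_sub_right, Gam_mul_right,
      Gam_ofNat_right] at ih2 ih1 ⊢
    linear_combination 3 * X 0 * ih2 - 3 * X 1 * ih1 + ih0 + 3 * deltoidT (q + 2) * hZ
      - 3 * deltoidT (q + 1) * hW - 3 * (p : ℝ[Z,W]) * hrel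

theorem Gam_deltoidT (p q : ℕ) :
    Gam (deltoidT p) (deltoidT q)
      = C ((p : ℝ) * q / 2) * (deltoidT p * deltoidT q - 3 * deltoidT (p + q)) := by
  have hC : 2 * C ((p : ℝ) * q / 2) = (p : ℝ[Z,W]) * (q : ℝ[Z,W]) := by
    rw [← map_ofNat C 2, ← map_mul, mul_div_cancel₀ _ two_ne_zero, map_mul, map_natCast,
      map_natCast]
  apply mul_left_cancel₀ (two_ne_zero : (2 : ℝ[Z,W]) ≠ 0)
  linear_combination two_mul_Gam_deltoidT p q
    - (deltoidT p * deltoidT q - 3 * deltoidT (p + q)) * hC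

theorem natCast_eq_deltoidT (T : ℤ → ℝ[Z,W])
    (hT0 : T 0 = 3) (hT1 : T 1 = 3 * X 0) (hT2 : T 2 = 9 * (X 0) ^ 2 - 6 * X 1)
    (hrec : ∀ p : ℤ, T (p + 3) = 3 * X 0 * T (p + 2) - 3 * X 1 * T (p + 1) + T p) (n : ℕ) :
    T n = deltoidT n := by
  induction n using deltoidT.induct with
  | case1 => simpa [deltoidT] using hT0
  | case2 => simpa [deltoidT] using hT1
  | case3 => simpa [deltoidT] using hT2
  | case4 n ih2 ih1 ih0 =>
    show T ((n + 3 : ℕ) : ℤ) = deltoidT (n + 3)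
    push_cast at ih2 ih1 ⊢
    rw [hrec, ih2, ih1, ih0, deltoidT]

theorem stmt_12 (T : ℤ → MvPolynomial (Fin 2) ℝ)
    (hT0 : T 0 = 3) (hT1 : T 1 = 3 * X 0) (hT2 : T 2 = 9 * (X 0) ^ 2 - 6 * X 1)
    (hrec : ∀ p : ℤ, T (p + 3) = 3 * X 0 * T (p + 2) - 3 * X 1 * T (p + 1) + T p) :
    ∀ p q : ℕ,
      Gam (T p) (T q)
        = C (((p : ℝ) * q) / 2) * (T p * T q - 3 * T ((p : ℤ) + q)) := by
  intro p q
  have hT := natCast_eq_deltoidT T hT0 hT1 hT2 hrec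
  rw [← Nat.cast_add, hT, hT, hT, Gam_deltoidT]
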